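/- arXiv:2111.07301 — 2 statements merged into one kernel-verified Lean document; each statement's English description precedes it below -/
import Mathlib

section
/- Let n ≥ 2, s ∈ (0,1), and q ∈ (2, 2n/(n-2s)). For radial functions u in H^1(ℝ^n) and any R ≥ 1, the tail integral satisfies (∫_R^∞ r^{n-1} |u(r)|^q dr)^{2/q} ≤ C ((R+1)/R^{q/2})^{2(n-1)/q} ∫_R^∞ r^{n-1}(|u'(r)|^2 + |u(r)|^2) dr, where C depends only on n and q. -/
open MeasureTheory Set Filter

/-- tail estimate for radial `H¹(ℝⁿ)` functions (represented by their
radial profile `u` with derivative `u'`): for every `R ≥ 1`,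
`(∫_R^∞ r^{n-1}|u|^q dr)^{2/q} ≤ C ((R+1)/R^{q/2})^{2(n-1)/q} ∫_R^∞ r^{n-1}(|u'|²+|u|²) dr`,
with `C = C(n,q)`. -/
theorem statement0 (n : ℕ) (hn : 2 ≤ n) (s q : ℝ) (hs : s ∈ Set.Ioo (0:ℝ) 1)
    (hq : 2 < q) (hq' : q < 2 * n / (n - 2 * s)) :
    ∃ C : ℝ, 0 < C ∧
      ∀ (u u' : ℝ → ℝ), (∀ r : ℝ, HasDerivAt u (u' r) r) →
        ∀ R : ℝ, 1 ≤ R →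
        IntegrableOn (fun r : ℝ => r ^ ((n:ℝ) - 1) * |u r| ^ q) (Set.Ioi R) volume →
        IntegrableOn (fun r : ℝ => r ^ ((n:ℝ) - 1) * (|u' r| ^ 2 + |u r| ^ 2))
          (Set.Ioi R) volume →
        (∫ r in Set.Ioi R, r ^ ((n:ℝ) - 1) * |u r| ^ q) ^ (2 / q)
          ≤ C * ((R + 1) / R ^ (q / 2)) ^ (2 * ((n:ℝ) - 1) / q)
            * ∫ r in Set.Ioi R, r ^ ((n:ℝ) - 1) * (|u' r| ^ 2 + |u r| ^ 2) := by
  have hq0 : (0:ℝ) < q := by linarith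
  refine ⟨(n:ℝ) ^ ((q - 2)/q), Real.rpow_pos_of_pos (by positivity) _, ?_⟩
  intro u u' hderiv R hR hint1 hint2
  have hn2 : (2:ℝ) ≤ (n:ℝ) := by exact_mod_cast hn
  set c : ℝ := (n:ℝ) - 1 with hcdef
  have hc1 : 1 ≤ c := by rw [hcdef]; linarith
  have hc0 : 0 < c := by linarith
  have hcn : c + 1 = (n:ℝ) := by rw [hcdef]; ring
  have hR0 : (0:ℝ) < R := by linarith
  have hucont : Continuous u := by
    exact continuous_iff_continuousAt.mpr fun r => (hderiv r).continuousAt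
  have hume : Measurable u := hucont.measurable
  have hu'me : Measurable u' := by
    have h : u' = deriv u := funext fun r => ((hderiv r).deriv).symm
    rw [h]; exact measurable_deriv u
  set w : ℝ → ℝ := fun r : ℝ => r ^ c * (|u' r| ^ 2 + |u r| ^ 2) with hwdef
  set A : ℝ := ∫ r in Set.Ioi R, w r with hAdef
  have hwnn : ∀ r ∈ Set.Ioi R, 0 ≤ w r := by
    intro r hr
    have hr0 : (0:ℝ) < r := lt_trans hR0 hr
    exact mul_nonneg (Real.rpow_nonneg hr0.le _) (by positivity)
  have hA0 : 0 ≤ A := setIntegral_nonneg measurableSet_Ioi hwnn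
  -- the auxiliary function g and its derivative
  set g : ℝ → ℝ := fun r : ℝ => r ^ c * (u r) ^ 2 with hgdef
  set g' : ℝ → ℝ := fun r : ℝ => c * r ^ (c - 1) * (u r) ^ 2 + r ^ c * (2 * u r ^ 1 * u' r)
    with hg'def
  have hgderiv : ∀ r : ℝ, 0 < r → HasDerivAt g (g' r) r := by
    intro r hr
    exact (Real.hasDerivAt_rpow_const (Or.inl hr.ne')).mul ((hderiv r).pow 2)
  have hgme : Measurable g := by fun_prop
  have hg'me : Measurable g' := by fun_prop
  -- pointwise bounds
  have hgw : ∀ r ∈ Set.Ioi R, g r ≤ w r := by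
    intro r hr
    have hr0 : (0:ℝ) < r := lt_trans hR0 hr
    have hrc0 : 0 ≤ r ^ c := Real.rpow_nonneg hr0.le _
    have h1 : (u r) ^ 2 = |u r| ^ 2 := (sq_abs _).symm
    rw [hgdef, hwdef]
    simp only []
    nlinarith [sq_nonneg (u' r), sq_abs (u' r), mul_nonneg hrc0 (sq_nonneg (u' r))]
  have hbound : ∀ r ∈ Set.Ioi R, |g' r| ≤ (n:ℝ) * w r := by
    intro r hr
    have hr1 : (1:ℝ) ≤ r := le_trans hR (le_of_lt hr)
    have hr0 : (0:ℝ) < r := lt_of_lt_of_le one_pos hr1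
    have hrc0 : 0 ≤ r ^ c := Real.rpow_nonneg hr0.le _
    have hrc10 : 0 ≤ r ^ (c - 1) := Real.rpow_nonneg hr0.le _
    have hmono : r ^ (c - 1) ≤ r ^ c :=
      Real.rpow_le_rpow_of_exponent_le hr1 (by linarith)
    have e1 : |g' r| ≤ c * r ^ (c - 1) * (u r) ^ 2 + r ^ c * (2 * |u r| * |u' r|) := by
      refine (abs_add_le _ _).trans ?_
      have a1 : |c * r ^ (c - 1) * (u r) ^ 2| = c * r ^ (c - 1) * (u r) ^ 2 :=
        abs_of_nonneg (mul_nonneg (mul_nonneg hc0.le hrc10) (sq_nonneg _))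
      have a2 : |r ^ c * (2 * u r ^ 1 * u' r)| = r ^ c * (2 * |u r| * |u' r|) := by
        rw [abs_mul, abs_of_nonneg hrc0, abs_mul, abs_mul, abs_two, pow_one]
      rw [a1, a2]
    refine e1.trans ?_
    rw [hwdef]
    simp only []
    have hsq : (u r) ^ 2 ≤ |u' r| ^ 2 + |u r| ^ 2 := by
      nlinarith [sq_abs (u r), sq_abs (u' r), sq_nonneg (u' r)]
    have t1 : c * r ^ (c - 1) * (u r) ^ 2 ≤ c * (r ^ c * (|u' r| ^ 2 + |u r| ^ 2)) := by
      have s1 : r ^ (c - 1) * (u r) ^ 2 ≤ r ^ c * (u r) ^ 2 :=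
        mul_le_mul_of_nonneg_right hmono (sq_nonneg _)
      have s2 : r ^ c * (u r) ^ 2 ≤ r ^ c * (|u' r| ^ 2 + |u r| ^ 2) :=
        mul_le_mul_of_nonneg_left hsq hrc0
      calc c * r ^ (c - 1) * (u r) ^ 2 = c * (r ^ (c - 1) * (u r) ^ 2) := by ring
        _ ≤ c * (r ^ c * (u r) ^ 2) := mul_le_mul_of_nonneg_left s1 hc0.le
        _ ≤ c * (r ^ c * (|u' r| ^ 2 + |u r| ^ 2)) := mul_le_mul_of_nonneg_left s2 hc0.le
    have t2 : r ^ c * (2 * |u r| * |u' r|) ≤ r ^ c * (|u' r| ^ 2 + |u r| ^ 2) := by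
      refine mul_le_mul_of_nonneg_left ?_ hrc0
      nlinarith [sq_nonneg (|u r| - |u' r|)]
    have t3 : (n:ℝ) * (r ^ c * (|u' r| ^ 2 + |u r| ^ 2))
        = c * (r ^ c * (|u' r| ^ 2 + |u r| ^ 2)) + r ^ c * (|u' r| ^ 2 + |u r| ^ 2) := by
      rw [← hcn]; ring
    linarith
  -- integrability of g and g' on Ioi R
  have hgInt : IntegrableOn g (Set.Ioi R) volume := by
    refine hint2.mono' hgme.aestronglyMeasurable ?_
    rw [ae_restrict_iff' measurableSet_Ioi]
    filter_upwards with r hr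
    have hr0 : (0:ℝ) < r := lt_trans hR0 hr
    rw [Real.norm_eq_abs, abs_of_nonneg (mul_nonneg (Real.rpow_nonneg hr0.le _) (sq_nonneg _))]
    exact hgw r hr
  have hg'Int : IntegrableOn g' (Set.Ioi R) volume := by
    refine (hint2.const_mul ((n:ℝ))).mono' hg'me.aestronglyMeasurable ?_
    rw [ae_restrict_iff' measurableSet_Ioi]
    filter_upwards with r hr
    rw [Real.norm_eq_abs]
    exact hbound r hr
  -- FTC
  have hFTC : ∀ r ∈ Set.Ioi R, ∀ x, r ≤ x → ∫ t in r..x, g' t = g x - g r := by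
    intro r hr x hx
    refine intervalIntegral.integral_eq_sub_of_hasDerivAt (fun t ht => ?_) ?_
    · rw [Set.uIcc_of_le hx] at ht
      exact hgderiv t (by have := ht.1; simp only [Set.mem_Ioi] at hr; linarith)
    · refine (hg'Int.mono_set ?_).intervalIntegrable
      rw [Set.uIcc_of_le hx]
      intro t ht
      simp only [Set.mem_Ioi] at hr ⊢
      exact lt_of_lt_of_le hr ht.1
  have hglim : ∀ r ∈ Set.Ioi R, Tendsto g atTop (nhds (g r + ∫ t in Set.Ioi r, g' t)) := by
    intro r hr
    have hsub : Set.Ioi r ⊆ Set.Ioi R := Set.Ioi_subset_Ioi (le_of_lt hr)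
    have h1 : Tendsto (fun x => g r + ∫ t in r..x, g' t) atTop
        (nhds (g r + ∫ t in Set.Ioi r, g' t)) :=
      tendsto_const_nhds.add
        (intervalIntegral_tendsto_integral_Ioi r (hg'Int.mono_set hsub) tendsto_id)
    refine h1.congr' ?_
    filter_upwards [eventually_ge_atTop r] with x hx
    rw [hFTC r hr x hx]; ring
  obtain ⟨L, hL⟩ : ∃ L, Tendsto g atTop (nhds L) :=
    ⟨_, hglim (R + 1) (by simp only [Set.mem_Ioi]; linarith)⟩
  have hL0 : L = 0 := by
    have hLnn : 0 ≤ L := by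
      refine ge_of_tendsto hL ?_
      filter_upwards [eventually_ge_atTop (1:ℝ)] with x hx
      exact mul_nonneg (Real.rpow_nonneg (by linarith) _) (sq_nonneg _)
    by_contra h
    have hLpos : 0 < L := lt_of_le_of_ne hLnn (Ne.symm h)
    have hev : ∀ᶠ x in atTop, L/2 ≤ g x := hL.eventually (eventually_ge_nhds (by linarith))
    obtain ⟨M, hM⟩ := eventually_atTop.mp hev
    set M' : ℝ := max M (R + 1) with hM'def
    have hM'R : R < M' := lt_of_lt_of_le (by linarith) (le_max_right _ _)
    have hconst : IntegrableOn (fun _ : ℝ => L/2) (Set.Ioi M') volume := by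
      refine (hgInt.mono_set (Set.Ioi_subset_Ioi hM'R.le)).mono'
        aestronglyMeasurable_const ?_
      rw [ae_restrict_iff' measurableSet_Ioi]
      filter_upwards with x hx
      rw [Real.norm_eq_abs, abs_of_pos (by linarith)]
      exact hM x (le_trans (le_max_left _ _) hx.le)
    rw [integrableOn_const_iff] at hconst
    rcases hconst with h1 | h1
    · rw [enorm_eq_zero] at h1; linarith
    · simp [Real.volume_Ioi] at h1
  have key : ∀ r ∈ Set.Ioi R, g r ≤ (n:ℝ) * A := by
    intro r hr
    have heq : g r = - ∫ t in Set.Ioi r, g' t := by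
      have := tendsto_nhds_unique (hglim r hr) hL
      rw [hL0] at this; linarith
    have h1 : g r ≤ |∫ t in Set.Ioi r, g' t| := by
      rw [heq]; exact neg_le_abs _
    have h2 : |∫ t in Set.Ioi r, g' t| ≤ ∫ t in Set.Ioi r, |g' t| := by
      simpa [Real.norm_eq_abs] using norm_integral_le_integral_norm (μ := volume.restrict (Set.Ioi r)) g'
    have h3 : ∫ t in Set.Ioi r, |g' t| ≤ ∫ t in Set.Ioi R, |g' t| := by
      refine setIntegral_mono_set hg'Int.abs ?_ ?_
      · exact Eventually.of_forall fun t => abs_nonneg _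
      · exact HasSubset.Subset.eventuallyLE (Set.Ioi_subset_Ioi (le_of_lt hr))
    have h4 : ∫ t in Set.Ioi R, |g' t| ≤ ∫ t in Set.Ioi R, (n:ℝ) * w t :=
      setIntegral_mono_on hg'Int.abs (hint2.const_mul _) measurableSet_Ioi hbound
    have h5 : ∫ t in Set.Ioi R, (n:ℝ) * w t = (n:ℝ) * A := by
      rw [hAdef]; exact integral_const_mul _ _
    linarith
  -- now the main estimate
  rcases eq_or_lt_of_le hA0 with hA | hA
  · -- A = 0 : u vanishes on Ioi R
    have huz : ∀ r ∈ Set.Ioi R, u r = 0 := by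
      intro r hr
      have hb := key r hr
      rw [← hA, mul_zero] at hb
      have hr0 : (0:ℝ) < r := lt_trans hR0 hr
      have hrc : 0 < r ^ c := Real.rpow_pos_of_pos hr0 _
      have hb' : r ^ c * (u r) ^ 2 ≤ 0 := hb
      have h2 : (u r) ^ 2 = 0 := by
        refine le_antisymm ?_ (sq_nonneg _)
        nlinarith [hrc, sq_nonneg (u r)]
      exact pow_eq_zero_iff two_ne_zero |>.mp h2
    have hzero : (∫ r in Set.Ioi R, r ^ c * |u r| ^ q) = 0 := by
      rw [setIntegral_congr_fun measurableSet_Ioi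
        (g := fun _ : ℝ => (0:ℝ)) (fun r hr => by
          rw [huz r hr]; simp [Real.zero_rpow hq0.ne'])]
      simp
    rw [hzero, Real.zero_rpow (div_pos two_pos hq0).ne', ← hA, mul_zero]
  · -- A > 0
    have hnA : 0 < (n:ℝ) * A := mul_pos (by positivity) hA
    set K : ℝ := ((n:ℝ) * A) ^ ((q - 2)/2) * R ^ (-(c * (q - 2)/2)) with hKdef
    have hK0 : 0 ≤ K :=
      mul_nonneg (Real.rpow_nonneg hnA.le _) (Real.rpow_nonneg hR0.le _)
    have pointwise : ∀ r ∈ Set.Ioi R, r ^ c * |u r| ^ q ≤ K * w r := by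
      intro r hr
      have hr1 : (1:ℝ) ≤ r := le_trans hR (le_of_lt hr)
      have hr0 : (0:ℝ) < r := lt_of_lt_of_le one_pos hr1
      have hrc0 : 0 < r ^ c := Real.rpow_pos_of_pos hr0 _
      have hu2 : |u r| ^ (2:ℝ) ≤ (n:ℝ) * A * r ^ (-c) := by
        have hb := key r hr
        have h1 : |u r| ^ (2:ℝ) = (u r) ^ 2 := by
          rw [show (2:ℝ) = ((2:ℕ):ℝ) by norm_num, Real.rpow_natCast, sq_abs]
        rw [h1, Real.rpow_neg hr0.le]
        calc (u r) ^ 2 = (r ^ c * (u r) ^ 2) * (r ^ c)⁻¹ := by field_simp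
          _ ≤ ((n:ℝ) * A) * (r ^ c)⁻¹ :=
              mul_le_mul_of_nonneg_right hb (inv_nonneg.mpr hrc0.le)
      rcases eq_or_ne (u r) 0 with h0 | h0
      · rw [h0]
        simp only [abs_zero, Real.zero_rpow hq0.ne', mul_zero]
        exact mul_nonneg hK0 (hwnn r hr)
      · have hu0 : 0 < |u r| := abs_pos.mpr h0
        have key2 : |u r| ^ q = |u r| ^ (q - 2) * |u r| ^ (2:ℝ) := by
          rw [← Real.rpow_add hu0]; ring_nf
        have h3 : |u r| ^ (q - 2) = (|u r| ^ (2:ℝ)) ^ ((q - 2)/2) := by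
          rw [← Real.rpow_mul (abs_nonneg _)]; congr 1; ring
        have h4 : (|u r| ^ (2:ℝ)) ^ ((q - 2)/2) ≤ ((n:ℝ) * A * r ^ (-c)) ^ ((q - 2)/2) :=
          Real.rpow_le_rpow (Real.rpow_nonneg (abs_nonneg _) _) hu2
            (by linarith)
        have h5 : ((n:ℝ) * A * r ^ (-c)) ^ ((q - 2)/2)
            = ((n:ℝ) * A) ^ ((q - 2)/2) * r ^ (-(c * (q - 2)/2)) := by
          rw [Real.mul_rpow hnA.le (Real.rpow_nonneg hr0.le _), ← Real.rpow_mul hr0.le]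
          congr 2; ring
        have h6 : r ^ (-(c * (q - 2)/2)) ≤ R ^ (-(c * (q - 2)/2)) := by
          rw [Real.rpow_neg hr0.le, Real.rpow_neg hR0.le]
          have hpos : 0 < R ^ (c * (q - 2)/2) := Real.rpow_pos_of_pos hR0 _
          have hle : R ^ (c * (q - 2)/2) ≤ r ^ (c * (q - 2)/2) :=
            Real.rpow_le_rpow hR0.le hr.le
              (div_nonneg (mul_nonneg hc0.le (by linarith)) (by norm_num))
          exact inv_anti₀ hpos hle
        have h7 : |u r| ^ (q - 2) ≤ K := by
          rw [h3, hKdef]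
          refine h4.trans ?_
          rw [h5]
          exact mul_le_mul_of_nonneg_left h6 (Real.rpow_nonneg hnA.le _)
        have h8 : r ^ c * |u r| ^ (2:ℝ) ≤ w r := by
          have h1 : |u r| ^ (2:ℝ) = |u r| ^ (2:ℕ) := by
            rw [show (2:ℝ) = ((2:ℕ):ℝ) by norm_num, Real.rpow_natCast]
          have h2' : |u r| ^ (2:ℕ) ≤ |u' r| ^ (2:ℕ) + |u r| ^ (2:ℕ) :=
            le_add_of_nonneg_left (sq_nonneg _)
          calc r ^ c * |u r| ^ (2:ℝ) = r ^ c * |u r| ^ (2:ℕ) := by rw [h1]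
            _ ≤ r ^ c * (|u' r| ^ 2 + |u r| ^ 2) := mul_le_mul_of_nonneg_left h2' hrc0.le
            _ = w r := rfl
        calc r ^ c * |u r| ^ q = |u r| ^ (q - 2) * (r ^ c * |u r| ^ (2:ℝ)) := by
              rw [key2]; ring
          _ ≤ K * w r := by
              exact mul_le_mul h7 h8
                (mul_nonneg hrc0.le (Real.rpow_nonneg (abs_nonneg _) _)) hK0
    have hInt_le : (∫ r in Set.Ioi R, r ^ c * |u r| ^ q) ≤ K * A := by
      calc (∫ r in Set.Ioi R, r ^ c * |u r| ^ q)
          ≤ ∫ r in Set.Ioi R, K * w r :=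
            setIntegral_mono_on hint1 (hint2.const_mul K) measurableSet_Ioi pointwise
        _ = K * A := by rw [hAdef]; exact integral_const_mul _ _
    have hLHSnn : 0 ≤ ∫ r in Set.Ioi R, r ^ c * |u r| ^ q :=
      setIntegral_nonneg measurableSet_Ioi fun x hx =>
        mul_nonneg (Real.rpow_nonneg (le_of_lt (lt_trans hR0 hx)) _)
          (Real.rpow_nonneg (abs_nonneg _) _)
    have step : (∫ r in Set.Ioi R, r ^ c * |u r| ^ q) ^ (2/q) ≤ (K * A) ^ (2/q) :=
      Real.rpow_le_rpow hLHSnn hInt_le (div_nonneg (by norm_num) hq0.le)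
    have hqne : q ≠ 0 := hq0.ne'
    have hcompute : (K * A) ^ (2/q)
        = (n:ℝ) ^ ((q - 2)/q) * R ^ (-(c * (q - 2)/q)) * A := by
      have e2 : (((n:ℝ) * A) ^ ((q - 2)/2)) ^ (2/q)
          = (n:ℝ) ^ ((q - 2)/q) * A ^ ((q - 2)/q) := by
        rw [← Real.rpow_mul hnA.le,
          show (q - 2)/2 * (2/q) = (q - 2)/q by field_simp,
          Real.mul_rpow (Nat.cast_nonneg n) hA0]
      have e3 : (R ^ (-(c * (q - 2)/2))) ^ (2/q) = R ^ (-(c * (q - 2)/q)) := by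
        rw [← Real.rpow_mul hR0.le]
        congr 1
        field_simp
      have e4 : A ^ ((q - 2)/q) * A ^ (2/q) = A := by
        rw [← Real.rpow_add hA, show (q - 2)/q + 2/q = 1 by field_simp; ring, Real.rpow_one]
      calc (K * A) ^ (2/q) = K ^ (2/q) * A ^ (2/q) := Real.mul_rpow hK0 hA0
        _ = (((n:ℝ) * A) ^ ((q - 2)/2)) ^ (2/q) * (R ^ (-(c * (q - 2)/2))) ^ (2/q)
              * A ^ (2/q) := by
            rw [hKdef, Real.mul_rpow (Real.rpow_nonneg hnA.le _) (Real.rpow_nonneg hR0.le _)]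
        _ = ((n:ℝ) ^ ((q - 2)/q) * A ^ ((q - 2)/q)) * R ^ (-(c * (q - 2)/q)) * A ^ (2/q) := by
            rw [e2, e3]
        _ = (n:ℝ) ^ ((q - 2)/q) * R ^ (-(c * (q - 2)/q)) * (A ^ ((q - 2)/q) * A ^ (2/q)) := by
            ring
        _ = (n:ℝ) ^ ((q - 2)/q) * R ^ (-(c * (q - 2)/q)) * A := by rw [e4]
    have hfinal : (n:ℝ) ^ ((q - 2)/q) * R ^ (-(c * (q - 2)/q)) * A
        ≤ (n:ℝ) ^ ((q - 2)/q) * ((R + 1) / R ^ (q/2)) ^ (2 * c/q) * A := by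
      have hden : 0 < R ^ (q/2) := Real.rpow_pos_of_pos hR0 _
      have h8 : R ^ (1 - q/2) ≤ (R + 1) / R ^ (q/2) := by
        rw [Real.rpow_sub hR0, Real.rpow_one]
        exact (div_le_div_iff_of_pos_right hden).mpr (by linarith)
      have h9 : R ^ (-(c * (q - 2)/q)) = (R ^ (1 - q/2)) ^ (2 * c/q) := by
        rw [← Real.rpow_mul hR0.le]
        congr 1
        field_simp
        ring
      have h10 : (R ^ (1 - q/2)) ^ (2 * c/q) ≤ ((R + 1) / R ^ (q/2)) ^ (2 * c/q) :=
        Real.rpow_le_rpow (Real.rpow_nonneg hR0.le _) h8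
          (div_nonneg (by linarith) hq0.le)
      have h11 : R ^ (-(c * (q - 2)/q)) ≤ ((R + 1) / R ^ (q/2)) ^ (2 * c/q) := h9 ▸ h10
      exact mul_le_mul_of_nonneg_right
        (mul_le_mul_of_nonneg_left h11 (Real.rpow_nonneg (Nat.cast_nonneg n) _)) hA0
    calc (∫ r in Set.Ioi R, r ^ c * |u r| ^ q) ^ (2/q) ≤ (K * A) ^ (2/q) := step
      _ = (n:ℝ) ^ ((q - 2)/q) * R ^ (-(c * (q - 2)/q)) * A := hcompute
      _ ≤ (n:ℝ) ^ ((q - 2)/q) * ((R + 1) / R ^ (q/2)) ^ (2 * c/q) * A := hfinal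
end

section
/- (Lions dichotomy.) Let q ∈ (1, ∞) and let (u_j) ⊂ L_q(ℝ^n) with ∫|u_j|^q dx bounded away from 0 and ∞. Then, up to a subsequence, either (Concentration) there exist λ ∈ (0,1] and points x_j ∈ ℝ^n such that for every ε > 0 there are ρ > 0, ρ_j → +∞ and j_0 with |∫_{B_ρ(x_j)}|u_j|^q − λ∫_{ℝ^n}|u_j|^q| + |∫_{ℝ^n∖B_{ρ_j}(x_j)}|u_j|^q − (1−λ)∫_{ℝ^n}|u_j|^q| < ε ∫_{ℝ^n}|u_j|^q for all j ≥ j_0; or (Vanishing) for every ρ > 0, lim_j sup_{x∈ℝ^n} ∫_{B_ρ(x)} |u_j|^q dx = 0. -/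
/-!
If vanishing fails, some ball of a fixed radius `ρ₀` carries mass at least `δ > 0` along a
subsequence, around centers `x_j`. A diagonal extraction makes the normalized concentration
functions `m ↦ ∫_{B(x_j, ρ₀ + m)} f_j / ∫ f_j` converge pointwise to some `β`, and
`λ = sup β ≥ δ / C > 0`, where `C` bounds the total masses. Choosing `M` with `β M` close to `λ`
gives the inner ball; radii `ρ₀ + k_j` with `k_j → ∞` slowly enough that the ratio at `k_j` is
still close to its limit give the outer ones, since the ratios are monotone in the radius and
bounded by `λ` in the limit.
-/

open MeasureTheory Filter Metric

theorem exists_strictMono_forall_tendsto_of_mem_Icc {ι : Type*} [Countable ι] {a b : ℝ}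
    (F : ℕ → ι → ℝ) (hF : ∀ j i, F j i ∈ Set.Icc a b) :
    ∃ τ : ℕ → ℕ, StrictMono τ ∧ ∃ g : ι → ℝ, (∀ i, g i ∈ Set.Icc a b) ∧
      ∀ i, Tendsto (fun j => F (τ j) i) atTop (nhds (g i)) := by
  obtain ⟨g, τ, hτ, hg⟩ := CompactSpace.tendsto_subseq (X := ι → Set.Icc a b)
    fun j i => ⟨F j i, hF j i⟩
  exact ⟨τ, hτ, fun i => g i, fun i => (g i).2,
    fun i => (continuous_subtype_val.tendsto _).comp (tendsto_pi_nhds.1 hg i)⟩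

theorem exists_tendsto_atTop_eventually {P : ℕ → ℕ → Prop} (h : ∀ m, ∀ᶠ j in atTop, P m j) :
    ∃ k : ℕ → ℕ, Tendsto k atTop atTop ∧ ∀ᶠ j in atTop, P (k j) j := by
  classical
  choose N hN using fun m => eventually_atTop.1 (h m)
  refine ⟨fun j => Nat.findGreatest (fun m => N m ≤ j) j, ?_, ?_⟩
  · refine tendsto_atTop_atTop.2 fun b => ⟨max (N b) b, fun j hj => ?_⟩
    exact Nat.le_findGreatest (le_of_max_le_right hj) (le_of_max_le_left hj)
  · refine eventually_atTop.2 ⟨N 0, fun j hj => hN _ _ ?_⟩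
    exact Nat.findGreatest_spec (P := fun m => N m ≤ j) (Nat.zero_le j) hj

theorem exists_eventually_abs_sub_iSup_lt {r : ℕ → ℕ → ℝ} {β : ℕ → ℝ}
    (hmono : ∀ j, Monotone (r j)) (hβ : ∀ m, Tendsto (fun j => r j m) atTop (nhds (β m)))
    (hbdd : BddAbove (Set.range β)) {η : ℝ} (hη : 0 < η) :
    ∃ M : ℕ, ∃ k : ℕ → ℕ, Tendsto k atTop atTop ∧
      ∀ᶠ j in atTop, |r j M - ⨆ m, β m| < η ∧ |r j (k j) - ⨆ m, β m| < η := by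
  obtain ⟨M, hM⟩ : ∃ M, (⨆ m, β m) - η / 2 < β M :=
    exists_lt_of_lt_ciSup (by linarith)
  have hclose : ∀ m, ∀ᶠ j in atTop, |r j m - β m| < η / 2 := fun m =>
    (Metric.tendsto_nhds.1 (hβ m) _ (half_pos hη)).mono fun j hj => by rwa [Real.dist_eq] at hj
  obtain ⟨k, hk, hkj⟩ := exists_tendsto_atTop_eventually hclose
  refine ⟨M, k, hk, ?_⟩
  filter_upwards [hclose M, hkj, hk.eventually_ge_atTop M] with j hjM hjk hMk
  have hβM := le_ciSup hbdd M
  have hβk := le_ciSup hbdd (k j)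
  have hrMk := hmono j hMk
  obtain ⟨hjM₁, hjM₂⟩ := abs_lt.1 hjM
  obtain ⟨hjk₁, hjk₂⟩ := abs_lt.1 hjk
  rw [abs_lt, abs_lt]
  constructor <;> constructor <;> linarith

section Concentration

variable {α : Type*} [PseudoMetricSpace α] [MeasurableSpace α]

def Concentrates (μ : Measure α) (f : ℕ → α → ℝ) (lam : ℝ) (x : ℕ → α) : Prop :=
  ∀ ε : ℝ, 0 < ε → ∃ ρ : ℝ, 0 < ρ ∧ ∃ ρs : ℕ → ℝ,
    Tendsto ρs atTop atTop ∧ ∃ j0 : ℕ, ∀ j ≥ j0,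
      |(∫ y in ball (x j) ρ, f j y ∂μ) - lam * ∫ y, f j y ∂μ|
      + |(∫ y in (ball (x j) (ρs j))ᶜ, f j y ∂μ) - (1 - lam) * ∫ y, f j y ∂μ|
      < ε * ∫ y, f j y ∂μ

def Vanishes (μ : Measure α) (f : ℕ → α → ℝ) : Prop :=
  ∀ ρ : ℝ, 0 < ρ → Tendsto (fun j => ⨆ x : α, ∫ y in ball x ρ, f j y ∂μ) atTop (nhds 0)

variable {μ : Measure α} {f : ℕ → α → ℝ}

theorem exists_subseq_ball_integral_gt_of_not_vanishes [Nonempty α]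
    (hf : ∀ j y, 0 ≤ f j y) (h : ¬ Vanishes μ f) :
    ∃ ρ : ℝ, 0 < ρ ∧ ∃ δ : ℝ, 0 < δ ∧ ∃ σ : ℕ → ℕ, StrictMono σ ∧ ∃ x : ℕ → α,
      ∀ j, δ < ∫ y in ball (x j) ρ, f (σ j) y ∂μ := by
  simp only [Vanishes, not_forall] at h
  obtain ⟨ρ, hρ, hnt⟩ := h
  have hnonneg : ∀ j, 0 ≤ ⨆ x : α, ∫ y in ball x ρ, f j y ∂μ := fun j =>
    Real.iSup_nonneg fun x => integral_nonneg (hf j)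
  obtain ⟨δ, hδ, hfreq⟩ : ∃ δ : ℝ, 0 < δ ∧
      ∃ᶠ j in atTop, δ < ⨆ x : α, ∫ y in ball x ρ, f j y ∂μ := by
    simp only [Metric.tendsto_nhds, not_forall, Real.dist_eq, sub_zero, not_eventually,
      not_lt, exists_prop] at hnt
    obtain ⟨δ, hδ, hfreq⟩ := hnt
    refine ⟨δ / 2, half_pos hδ, hfreq.mono fun j hj => ?_⟩
    rw [abs_of_nonneg (hnonneg j)] at hj
    linarith
  obtain ⟨σ, hσ, hσδ⟩ := extraction_of_frequently_atTop hfreq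
  choose x hx using fun j => exists_lt_of_lt_ciSup (hσδ j)
  exact ⟨ρ, hρ, δ, hδ, σ, hσ, x, hx⟩

theorem concentrates_of_tendsto_ball_integral_div [OpensMeasurableSpace α]
    (hf : ∀ j y, 0 ≤ f j y) (hint : ∀ j, Integrable (f j) μ) (hpos : ∀ j, 0 < ∫ y, f j y ∂μ)
    {x : ℕ → α} {ρ₀ : ℝ} (hρ₀ : 0 < ρ₀) {β : ℕ → ℝ} (hbdd : BddAbove (Set.range β))
    (hβ : ∀ m : ℕ, Tendsto (fun j => (∫ y in ball (x j) (ρ₀ + m), f j y ∂μ) / ∫ y, f j y ∂μ)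
      atTop (nhds (β m))) :
    Concentrates μ f (⨆ m, β m) x := by
  intro ε hε
  have hmono : ∀ j, Monotone fun m : ℕ => (∫ y in ball (x j) (ρ₀ + m), f j y ∂μ) / ∫ y, f j y ∂μ :=
    fun j m m' hm => div_le_div_of_nonneg_right (setIntegral_mono_set (hint j).integrableOn
      (.of_forall (hf j)) (ball_subset_ball (by gcongr)).eventuallyLE) (hpos j).le
  obtain ⟨M, k, hk, hjk⟩ := exists_eventually_abs_sub_iSup_lt hmono hβ hbdd (half_pos hε)
  obtain ⟨j0, hj0⟩ := eventually_atTop.1 hjk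
  refine ⟨ρ₀ + M, by positivity, fun j => ρ₀ + k j,
    tendsto_atTop_add_const_left _ _ (tendsto_natCast_atTop_atTop.comp hk), j0, fun j hj => ?_⟩
  obtain ⟨hM, hkj⟩ := hj0 j hj
  set T := ∫ y, f j y ∂μ
  have hT := hpos j
  have hball : ∀ m : ℕ, ∫ y in ball (x j) (ρ₀ + m), f j y ∂μ
      = (∫ y in ball (x j) (ρ₀ + m), f j y ∂μ) / T * T := fun m =>
    (div_mul_cancel₀ _ hT.ne').symm
  rw [setIntegral_compl measurableSet_ball (hint j), hball M, hball (k j)]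
  generalize (∫ y in ball (x j) (ρ₀ + M), f j y ∂μ) / T = a at hM ⊢
  generalize (∫ y in ball (x j) (ρ₀ + k j), f j y ∂μ) / T = b at hkj ⊢
  generalize ⨆ m, β m = V at hM hkj ⊢
  calc |a * T - V * T| + |T - b * T - (1 - V) * T| = (|a - V| + |b - V|) * T := by
        rw [show T - b * T - (1 - V) * T = -((b - V) * T) by ring, abs_neg, ← sub_mul,
          abs_mul, abs_mul, abs_of_pos hT, add_mul]
    _ < ε * T := by gcongr; linarith

theorem exists_subseq_concentrates_or_vanishes [Nonempty α] [OpensMeasurableSpace α]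
    (hf : ∀ j y, 0 ≤ f j y) (hint : ∀ j, Integrable (f j) μ) {c C : ℝ} (hc : 0 < c)
    (hlow : ∀ j, c ≤ ∫ y, f j y ∂μ) (hup : ∀ j, ∫ y, f j y ∂μ ≤ C) :
    ∃ σ : ℕ → ℕ, StrictMono σ ∧
      ((∃ lam : ℝ, lam ∈ Set.Ioc (0 : ℝ) 1 ∧ ∃ x : ℕ → α, Concentrates μ (fun j => f (σ j)) lam x)
        ∨ Vanishes μ (fun j => f (σ j))) := by
  by_cases hvan : Vanishes μ f
  · exact ⟨id, strictMono_id, Or.inr hvan⟩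
  obtain ⟨ρ₀, hρ₀, δ, hδ, σ₀, hσ₀, x, hx⟩ := exists_subseq_ball_integral_gt_of_not_vanishes hf hvan
  have hpos : ∀ j, 0 < ∫ y, f j y ∂μ := fun j => hc.trans_le (hlow j)
  -- Normalized by the total mass, the concentration functions stay in `[0, 1]`, so only they
  -- have to converge, not the totals.
  set r : ℕ → ℕ → ℝ := fun j m =>
    (∫ y in ball (x j) (ρ₀ + m), f (σ₀ j) y ∂μ) / ∫ y, f (σ₀ j) y ∂μ
  have hr : ∀ j m, r j m ∈ Set.Icc (0 : ℝ) 1 := fun j m =>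
    ⟨div_nonneg (integral_nonneg (hf _)) (hpos _).le, div_le_one_of_le₀
      (setIntegral_le_integral (hint _) (.of_forall (hf _))) (hpos _).le⟩
  obtain ⟨τ, hτ, β, hβr, hβ⟩ := exists_strictMono_forall_tendsto_of_mem_Icc r hr
  have hbdd : BddAbove (Set.range β) := ⟨1, Set.forall_mem_range.2 fun m => (hβr m).2⟩
  have hβ₀ : δ / C ≤ β 0 := ge_of_tendsto (hβ 0) (.of_forall fun j => by
    simp only [r, Nat.cast_zero, add_zero]
    exact div_le_div₀ (integral_nonneg (hf _)) (hx _).le (hpos _) (hup _))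
  refine ⟨σ₀ ∘ τ, hσ₀.comp hτ, Or.inl ⟨⨆ m, β m, ⟨?_, ciSup_le fun m => (hβr m).2⟩, x ∘ τ,
    concentrates_of_tendsto_ball_integral_div (fun j => hf _) (fun j => hint _) (fun j => hpos _)
      hρ₀ hbdd hβ⟩⟩
  have hC : 0 < C := (hpos 0).trans_le (hup 0)
  exact (div_pos hδ hC).trans_le (hβ₀.trans (le_ciSup hbdd 0))

end Concentration

theorem statement8_general (n : ℕ) (q : ℝ)
    (u : ℕ → EuclideanSpace ℝ (Fin n) → ℝ)
    (hint : ∀ j, Integrable (fun x => |u j x| ^ q) volume)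
    (c Cb : ℝ) (hc : 0 < c)
    (hlow : ∀ j, c ≤ ∫ x, |u j x| ^ q)
    (hup : ∀ j, ∫ x, |u j x| ^ q ≤ Cb) :
    ∃ σ : ℕ → ℕ, StrictMono σ ∧
      ((∃ lam : ℝ, lam ∈ Set.Ioc (0:ℝ) 1 ∧ ∃ x : ℕ → EuclideanSpace ℝ (Fin n),
        ∀ ε : ℝ, 0 < ε → ∃ ρ : ℝ, 0 < ρ ∧ ∃ ρs : ℕ → ℝ,
          Tendsto ρs atTop atTop ∧ ∃ j0 : ℕ, ∀ j ≥ j0,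
            |(∫ y in Metric.ball (x j) ρ, |u (σ j) y| ^ q)
                - lam * ∫ y, |u (σ j) y| ^ q|
            + |(∫ y in (Metric.ball (x j) (ρs j))ᶜ, |u (σ j) y| ^ q)
                - (1 - lam) * ∫ y, |u (σ j) y| ^ q|
            < ε * ∫ y, |u (σ j) y| ^ q)
      ∨ (∀ ρ : ℝ, 0 < ρ →
          Tendsto (fun j => ⨆ x : EuclideanSpace ℝ (Fin n),
            ∫ y in Metric.ball x ρ, |u (σ j) y| ^ q) atTop (nhds 0))) :=
  exists_subseq_concentrates_or_vanishes (fun j y => Real.rpow_nonneg (abs_nonneg (u j y)) q)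
    hint hc hlow hup

/-- Lions dichotomy: if `(u_j) ⊂ L_q(ℝⁿ)` has `∫|u_j|^q` bounded away from
`0` and `∞`, then up to a subsequence either concentration (with some weight `λ ∈ (0,1]`
and points `x_j`) or vanishing holds. -/
theorem statement8 (n : ℕ) (q : ℝ) (hq : 1 < q)
    (u : ℕ → EuclideanSpace ℝ (Fin n) → ℝ)
    (hint : ∀ j, Integrable (fun x => |u j x| ^ q) volume)
    (c Cb : ℝ) (hc : 0 < c)
    (hlow : ∀ j, c ≤ ∫ x, |u j x| ^ q)
    (hup : ∀ j, ∫ x, |u j x| ^ q ≤ Cb) :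
    ∃ σ : ℕ → ℕ, StrictMono σ ∧
      ((∃ lam : ℝ, lam ∈ Set.Ioc (0:ℝ) 1 ∧ ∃ x : ℕ → EuclideanSpace ℝ (Fin n),
        ∀ ε : ℝ, 0 < ε → ∃ ρ : ℝ, 0 < ρ ∧ ∃ ρs : ℕ → ℝ,
          Tendsto ρs atTop atTop ∧ ∃ j0 : ℕ, ∀ j ≥ j0,
            |(∫ y in Metric.ball (x j) ρ, |u (σ j) y| ^ q)
                - lam * ∫ y, |u (σ j) y| ^ q|
            + |(∫ y in (Metric.ball (x j) (ρs j))ᶜ, |u (σ j) y| ^ q)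
                - (1 - lam) * ∫ y, |u (σ j) y| ^ q|
            < ε * ∫ y, |u (σ j) y| ^ q)
      ∨ (∀ ρ : ℝ, 0 < ρ →
          Tendsto (fun j => ⨆ x : EuclideanSpace ℝ (Fin n),
            ∫ y in Metric.ball x ρ, |u (σ j) y| ^ q) atTop (nhds 0))) :=
  statement8_general n q u hint c Cb hc hlow hup
end
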